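/- arXiv:math/9405202 — 3 statements merged into one kernel-verified Lean document; each statement's English description precedes it below -/
import Mathlib

section
/- The bounding number 𝔟 is at most unif(ℳ), the least cardinality of a non-meager subset of Baire space: 𝔟 ≤ unif(ℳ). -/
/-!
The functions eventually majorized by a fixed `g` form the countable union over `N` of the sets
`{f | ∀ n ≥ N, f n < g n}`. Each is closed, and has empty interior because a basic open set of
Baire space constrains only finitely many coordinates. So a bounded family is meagre, and every
non-meagre family is unbounded. The Baire category theorem makes `ℕ → ℕ` itself non-meagre, so
the infimum defining `unif(ℳ)` is not the junk value of an empty infimum.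
-/

open Cardinal Set Filter

/-- `g` eventually majorizes `f`. -/
def EvMaj (g f : ℕ → ℕ) : Prop := ∀ᶠ n in Filter.atTop, f n < g n

/-- The bounding number 𝔟. -/
noncomputable def boundNum : Cardinal :=
  sInf {c : Cardinal | ∃ B : Set (ℕ → ℕ),
    (∀ g : ℕ → ℕ, ∃ f ∈ B, ¬ EvMaj g f) ∧ c = #B}

/-- The uniformity of the meager ideal: least cardinality of a non-meager set. -/
noncomputable def unifMeager (X : Type) [TopologicalSpace X] : Cardinal :=
  sInf {c : Cardinal | ∃ S : Set X, ¬ IsMeagre S ∧ c = #S}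

open Topology

section

variable {ι : Type*} {A : ι → Type*} [∀ i, TopologicalSpace (A i)] {I : Set ι} {s : ∀ i, Set (A i)}

theorem interior_pi_set_eq_empty (hI : I.Infinite) (hs : ∀ i ∈ I, (s i)ᶜ.Nonempty) :
    interior (I.pi s) = ∅ := by
  classical
  refine eq_empty_iff_forall_notMem.2 fun f hf => ?_
  have hnhds : I.pi s ∈ 𝓝 f := mem_interior_iff_mem_nhds.1 hf
  rw [nhds_pi, Filter.mem_pi] at hnhds
  obtain ⟨J, hJ, t, ht, hJI⟩ := hnhds
  obtain ⟨i, hiI, hiJ⟩ := (hI.sdiff hJ).nonempty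
  obtain ⟨a, ha⟩ := hs i hiI
  have hupdate : Function.update f i a ∈ J.pi t := fun j hj => by
    rw [Function.update_of_ne (ne_of_mem_of_not_mem hj hiJ)]
    exact mem_of_mem_nhds (ht j)
  exact ha (by simpa using hJI hupdate i hiI)

theorem isNowhereDense_pi_set (hI : I.Infinite) (hsc : ∀ i ∈ I, IsClosed (s i))
    (hs : ∀ i ∈ I, (s i)ᶜ.Nonempty) : IsNowhereDense (I.pi s) :=
  (isClosed_set_pi hsc).isNowhereDense_iff.2 (interior_pi_set_eq_empty hI hs)

end

theorem setOf_evMaj_eq_iUnion (g : ℕ → ℕ) :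
    {f | EvMaj g f} = ⋃ N, (Ici N).pi fun n => Iio (g n) := by
  ext f
  simp [EvMaj, eventually_atTop]

theorem isMeagre_setOf_evMaj (g : ℕ → ℕ) : IsMeagre {f | EvMaj g f} := by
  rw [setOf_evMaj_eq_iUnion]
  exact isMeagre_iUnion fun N => IsNowhereDense.isMeagre <|
    isNowhereDense_pi_set (s := fun n => Iio (g n)) (Ici_infinite N)
      (fun n _ => isClosed_discrete _) fun n _ => ⟨g n, by simp⟩

theorem exists_not_evMaj_of_not_isMeagre {S : Set (ℕ → ℕ)} (hS : ¬ IsMeagre S) (g : ℕ → ℕ) :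
    ∃ f ∈ S, ¬ EvMaj g f := by
  by_contra! h
  exact hS ((isMeagre_setOf_evMaj g).mono h)

theorem boundNum_le_unifMeager : boundNum ≤ unifMeager (ℕ → ℕ) := by
  refine le_csInf ⟨_, univ, not_isMeagre_of_isOpen isOpen_univ univ_nonempty, rfl⟩ ?_
  rintro _ ⟨S, hS, rfl⟩
  exact csInf_le' ⟨S, exists_not_evMaj_of_not_isMeagre hS, rfl⟩
end

section
/- The homogeneity characteristic 𝐡𝐨𝐦 is at most the maximum of 𝔯_σ and the dominating number 𝔡: 𝐡𝐨𝐦 ≤ max{𝔯_σ, 𝔡}. -/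
/-!
Fix a family `𝒳` witnessing `𝔯_σ` and a dominating family `D`. Given a colouring `c`, some
`X ∈ 𝒳` is split by none of the sets `{m | c {n, m}}`, so every `n` has a limit colour `β n`
along `X`, reached beyond some `f n`. Writing `x_k` for the `k`-th element of `X`, some `X' ∈ 𝒳`
makes `k ↦ β x_k` eventually constant, say `j`, on `X'`, and some `g ∈ D` dominates
`k ↦ f x_k`. Thinning `X'` so that each index exceeds `g` of the previous one yields indices whose
`x_k` form an almost homogeneous set of colour `j`. This set depends only on `(X, X', g)`, and
there are at most `max 𝔯_σ 𝔡` such triples since `𝔡` is infinite.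
-/

open Cardinal Set Filter

/-- `H` is homogeneous for the 2-coloring `c` of pairs. -/
def Homog2 (c : Finset ℕ → Bool) (H : Set ℕ) : Prop :=
  ∃ i : Bool, ∀ a ∈ H, ∀ b ∈ H, a ≠ b → c {a, b} = i

/-- `H` is almost homogeneous for `c`: homogeneous after removing a finite subset. -/
def AlmostHomog2 (c : Finset ℕ → Bool) (H : Set ℕ) : Prop :=
  ∃ F : Set ℕ, F.Finite ∧ F ⊆ H ∧ Homog2 c (H \ F)

/-- The homogeneity characteristic 𝐡𝐨𝐦. -/
noncomputable def homNum : Cardinal :=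
  sInf {κ : Cardinal | ∃ ℋ : Set (Set ℕ), (∀ H ∈ ℋ, H.Infinite) ∧
    (∀ c : Finset ℕ → Bool, ∃ H ∈ ℋ, AlmostHomog2 c H) ∧ κ = #ℋ}

/-- The dominating number 𝔡. -/
noncomputable def domNum : Cardinal :=
  sInf {c : Cardinal | ∃ D : Set (ℕ → ℕ),
    (∀ f : ℕ → ℕ, ∃ g ∈ D, EvMaj g f) ∧ c = #D}

/-- `X` splits `Y`: both `X ∩ Y` and `Y \ X` are infinite. -/
def Splits (X Y : Set ℕ) : Prop := (X ∩ Y).Infinite ∧ (Y \ X).Infinite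

/-- The σ-unsplitting number 𝔯_σ. -/
noncomputable def unsplitSigmaNum : Cardinal :=
  sInf {c : Cardinal | ∃ 𝒳 : Set (Set ℕ), (∀ X ∈ 𝒳, X.Infinite) ∧
    (∀ Y : ℕ → Set ℕ, ∃ X ∈ 𝒳, ∀ n : ℕ, ¬ Splits (Y n) X) ∧ c = #𝒳}

theorem not_splits_iff {X : Set ℕ} {p : ℕ → Bool} :
    ¬ Splits {m | p m} X ↔ ∃ b, ∀ᶠ m in atTop, m ∈ X → p m = b := by
  simp only [Splits, not_and_or, Set.not_infinite, ← Nat.cofinite_eq_atTop, eventually_cofinite]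
  constructor
  · rintro (h | h)
    · exact ⟨false, h.subset fun m hm => by simp_all⟩
    · exact ⟨true, h.subset fun m hm => by simp_all⟩
  · rintro ⟨b, hb⟩
    cases b
    · exact Or.inl (hb.subset fun m hm => by simp_all)
    · exact Or.inr (hb.subset fun m hm => by simp_all)

theorem StrictMono.eventually_mem_range_imp {φ : ℕ → ℕ} (hφ : StrictMono φ) {q : ℕ → Prop}
    (hq : ∀ᶠ k in atTop, q (φ k)) : ∀ᶠ m in atTop, m ∈ range φ → q m := by
  obtain ⟨K, hK⟩ := eventually_atTop.1 hq
  filter_upwards [eventually_ge_atTop (φ K)]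
  rintro _ hm ⟨k, rfl⟩
  exact hK k (hφ.le_iff_le.1 hm)

/-- Bolzano–Weierstrass in the Cantor space `ℕ → Bool`: the points `m ↦ (n ↦ m ∈ Y n)` have a
convergent subsequence, whose range no `Y n` splits. -/
theorem exists_infinite_forall_not_splits (Y : ℕ → Set ℕ) :
    ∃ X : Set ℕ, X.Infinite ∧ ∀ n, ¬ Splits (Y n) X := by
  classical
  obtain ⟨b, φ, hφ, hlim⟩ := CompactSpace.tendsto_subseq fun m n => decide (m ∈ Y n)
  refine ⟨range φ, infinite_range_of_injective hφ.injective, fun n => ?_⟩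
  have hconv : ∀ᶠ k in atTop, decide (φ k ∈ Y n) = b n :=
    ((continuous_apply n).tendsto b).comp hlim (isOpen_discrete {b n} |>.mem_nhds rfl)
  simpa using not_splits_iff.2
    ⟨b n, hφ.eventually_mem_range_imp (q := fun m => decide (m ∈ Y n) = b n) hconv⟩

theorem exists_unsplitSigma_family :
    ∃ 𝒳 : Set (Set ℕ), (∀ X ∈ 𝒳, X.Infinite) ∧
      (∀ Y : ℕ → Set ℕ, ∃ X ∈ 𝒳, ∀ n, ¬ Splits (Y n) X) ∧ unsplitSigmaNum = #𝒳 := by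
  have hne : {c : Cardinal | ∃ 𝒳 : Set (Set ℕ), (∀ X ∈ 𝒳, X.Infinite) ∧
      (∀ Y : ℕ → Set ℕ, ∃ X ∈ 𝒳, ∀ n, ¬ Splits (Y n) X) ∧ c = #𝒳}.Nonempty :=
    ⟨_, {X | X.Infinite}, fun _ hX => hX, exists_infinite_forall_not_splits, rfl⟩
  exact csInf_mem hne

theorem exists_dominating_family :
    ∃ D : Set (ℕ → ℕ), (∀ f, ∃ g ∈ D, EvMaj g f) ∧ domNum = #D := by
  have hne : {c : Cardinal | ∃ D : Set (ℕ → ℕ), (∀ f, ∃ g ∈ D, EvMaj g f) ∧ c = #D}.Nonempty :=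
    ⟨_, univ, fun f => ⟨f + 1, trivial, .of_forall fun n => Nat.lt_succ_self _⟩, rfl⟩
  exact csInf_mem hne

theorem Set.Finite.not_dominating {D : Set (ℕ → ℕ)} (hD : D.Finite) :
    ¬ ∀ f, ∃ g ∈ D, EvMaj g f := by
  intro hdom
  obtain ⟨g, hg, hfg⟩ := hdom fun n => hD.toFinset.sup fun g => g n
  have hle : ∀ n, g n ≤ hD.toFinset.sup fun g => g n :=
    fun n => Finset.le_sup (f := fun g => g n) (hD.mem_toFinset.2 hg)
  obtain ⟨n, hn⟩ := hfg.exists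
  exact (hle n).not_gt hn

theorem aleph0_le_domNum : ℵ₀ ≤ domNum := by
  obtain ⟨D, hD, hDcard⟩ := exists_dominating_family
  rw [hDcard, aleph0_le_mk_iff, infinite_coe_iff]
  exact fun hfin => hfin.not_dominating hD

noncomputable def sparseSeq (S : Set ℕ) (g : ℕ → ℕ) : ℕ → ℕ
  | 0 => sInf S
  | t + 1 => sInf (S ∩ Ioi (max (sparseSeq S g t) (g (sparseSeq S g t))))

theorem sparseSeq_mem {S : Set ℕ} (hS : S.Infinite) (g : ℕ → ℕ) : ∀ t, sparseSeq S g t ∈ S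
  | 0 => Nat.sInf_mem hS.nonempty
  | _ + 1 => (Nat.sInf_mem (hS.exists_gt _)).1

theorem max_lt_sparseSeq_succ {S : Set ℕ} (hS : S.Infinite) (g : ℕ → ℕ) (t : ℕ) :
    max (sparseSeq S g t) (g (sparseSeq S g t)) < sparseSeq S g (t + 1) :=
  (Nat.sInf_mem (hS.exists_gt _)).2

theorem sparseSeq_strictMono {S : Set ℕ} (hS : S.Infinite) (g : ℕ → ℕ) :
    StrictMono (sparseSeq S g) :=
  strictMono_nat_of_lt_succ fun t => (le_max_left _ _).trans_lt (max_lt_sparseSeq_succ hS g t)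

noncomputable def sparseSubset (X X' : Set ℕ) (g : ℕ → ℕ) : Set ℕ :=
  range (Nat.nth (· ∈ X) ∘ sparseSeq X' g)

theorem sparseSubset_infinite {X X' : Set ℕ} (hX : X.Infinite) (hX' : X'.Infinite)
    (g : ℕ → ℕ) : (sparseSubset X X' g).Infinite :=
  infinite_range_of_injective
    ((Nat.nth_strictMono hX).comp (sparseSeq_strictMono hX' g)).injective

theorem almostHomog2_range_of_eventually {c : Finset ℕ → Bool} {a : ℕ → ℕ}
    (ha : a.Injective) {j : Bool} (hj : ∀ᶠ t in atTop, ∀ u, t < u → c {a t, a u} = j) :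
    AlmostHomog2 c (range a) := by
  obtain ⟨T, hT⟩ := eventually_atTop.1 hj
  refine ⟨a '' Iio T, (finite_Iio T).image a, image_subset_range a _, j, ?_⟩
  have hlarge : ∀ t, a t ∉ a '' Iio T → T ≤ t := fun t ht =>
    not_lt.1 fun hlt => ht (mem_image_of_mem a hlt)
  rintro _ ⟨⟨t, rfl⟩, ht⟩ _ ⟨⟨u, rfl⟩, hu⟩ hne
  rcases lt_or_gt_of_ne (ha.ne_iff.1 hne) with htu | hut
  · exact hT t (hlarge t ht) u htu
  · rw [Finset.pair_comm]
    exact hT u (hlarge u hu) t hut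

/-- In a late pair `x < y` of `sparseSubset X X' g`, the sparseness puts `y` beyond `f x`, so the
pair has colour `β x = j`. -/
theorem almostHomog2_sparseSubset {c : Finset ℕ → Bool} {X X' : Set ℕ} (hX : X.Infinite)
    (hX' : X'.Infinite) {β : ℕ → Bool} {f g : ℕ → ℕ} {j : Bool}
    (hf : ∀ n, ∀ m ≥ f n, m ∈ X → c {n, m} = β n)
    (hj : ∀ᶠ k in atTop, k ∈ X' → β (Nat.nth (· ∈ X) k) = j)
    (hfg : EvMaj g (f ∘ Nat.nth (· ∈ X))) :
    AlmostHomog2 c (sparseSubset X X' g) := by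
  set e := Nat.nth (· ∈ X)
  set s := sparseSeq X' g
  have he : StrictMono e := Nat.nth_strictMono hX
  have hs : StrictMono s := sparseSeq_strictMono hX' g
  refine almostHomog2_range_of_eventually (he.comp hs).injective (j := j) ?_
  filter_upwards [hs.tendsto_atTop.eventually hj, hs.tendsto_atTop.eventually hfg]
    with t hjt hgt u htu
  have hfar : f (e (s t)) ≤ e (s u) := calc
    f (e (s t)) ≤ g (s t) := hgt.le
    _ ≤ s (t + 1) := ((le_max_right _ _).trans_lt (max_lt_sparseSeq_succ hX' g t)).le
    _ ≤ s u := hs.monotone htu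
    _ ≤ e (s u) := he.le_apply
  calc c {e (s t), e (s u)} = β (e (s t)) := hf _ _ hfar (Nat.nth_mem_of_infinite hX _)
    _ = j := hjt (sparseSeq_mem hX' g t)

theorem exists_almostHomog2_sparseSubset {𝒳 : Set (Set ℕ)} {D : Set (ℕ → ℕ)}
    (h𝒳inf : ∀ X ∈ 𝒳, X.Infinite) (h𝒳 : ∀ Y : ℕ → Set ℕ, ∃ X ∈ 𝒳, ∀ n, ¬ Splits (Y n) X)
    (hD : ∀ f, ∃ g ∈ D, EvMaj g f) (c : Finset ℕ → Bool) :
    ∃ X ∈ 𝒳, ∃ X' ∈ 𝒳, ∃ g ∈ D, AlmostHomog2 c (sparseSubset X X' g) := by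
  obtain ⟨X, hX, hXY⟩ := h𝒳 fun n => {m | c {n, m}}
  choose β hβ using fun n => not_splits_iff.1 (hXY n)
  choose f hf using fun n => eventually_atTop.1 (hβ n)
  obtain ⟨X', hX', hX'Y⟩ := h𝒳 fun _ => {k | β (Nat.nth (· ∈ X) k)}
  obtain ⟨j, hj⟩ := not_splits_iff.1 (hX'Y 0)
  obtain ⟨g, hg, hfg⟩ := hD (f ∘ Nat.nth (· ∈ X))
  exact ⟨X, hX, X', hX', g, hg,
    almostHomog2_sparseSubset (h𝒳inf X hX) (h𝒳inf X' hX') hf hj hfg⟩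

theorem homNum_le_max : homNum ≤ max unsplitSigmaNum domNum := by
  obtain ⟨𝒳, h𝒳inf, h𝒳, h𝒳card⟩ := exists_unsplitSigma_family
  obtain ⟨D, hD, hDcard⟩ := exists_dominating_family
  set κ := max unsplitSigmaNum domNum
  have hκ : ℵ₀ ≤ κ := le_max_of_le_right aleph0_le_domNum
  let ℋ := range fun p : 𝒳 × 𝒳 × D => sparseSubset p.1 p.2.1 p.2.2
  have hℋinf : ∀ H ∈ ℋ, H.Infinite := by
    rintro _ ⟨⟨⟨X, hX⟩, ⟨X', hX'⟩, g⟩, rfl⟩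
    exact sparseSubset_infinite (h𝒳inf X hX) (h𝒳inf X' hX') g
  have hℋhom : ∀ c, ∃ H ∈ ℋ, AlmostHomog2 c H := fun c => by
    obtain ⟨X, hX, X', hX', g, hg, hc⟩ := exists_almostHomog2_sparseSubset h𝒳inf h𝒳 hD c
    exact ⟨_, ⟨⟨⟨X, hX⟩, ⟨X', hX'⟩, ⟨g, hg⟩⟩, rfl⟩, hc⟩
  calc homNum ≤ #ℋ := csInf_le' ⟨ℋ, hℋinf, hℋhom, rfl⟩
    _ ≤ #(𝒳 × 𝒳 × D) := mk_range_le
    _ = #𝒳 * (#𝒳 * #D) := by simp only [mk_prod, lift_id]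
    _ ≤ κ * (κ * κ) := by
      rw [← h𝒳card, ← hDcard]
      gcongr
      exacts [le_max_left _ _, le_max_left _ _, le_max_right _ _]
    _ = κ := by rw [mul_eq_self hκ, mul_eq_self hκ]
end

section
/- The pigeonhole partition characteristic 𝐩𝐚𝐫_{1c} equals min{𝔟, 𝔰}: the least cardinality of a set 𝒳 of functions ℕ → ℕ such that no single infinite H ⊆ ℕ has the property that every f ∈ 𝒳 is constant or injective on a cofinite subset of H equals the minimum of the bounding number and the splitting number. -/
open Cardinal Set Filter

/-- The splitting number 𝔰. -/
noncomputable def splitNum : Cardinal :=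
  sInf {c : Cardinal | ∃ S : Set (Set ℕ),
    (∀ Y : Set ℕ, Y.Infinite → ∃ X ∈ S, Splits X Y) ∧ c = #S}

/-- `f` is constant or injective on a cofinite subset of `H`. -/
def ConstOrInjModFin (f : ℕ → ℕ) (H : Set ℕ) : Prop :=
  ∃ F : Set ℕ, F.Finite ∧ F ⊆ H ∧
    ((∃ m : ℕ, ∀ n ∈ H \ F, f n = m) ∨ Set.InjOn f (H \ F))

/-- The pigeonhole partition characteristic 𝐩𝐚𝐫_{1c}. -/
noncomputable def parNum1c : Cardinal :=
  sInf {κ : Cardinal | ∃ 𝒳 : Set (ℕ → ℕ),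
    (¬ ∃ H : Set ℕ, H.Infinite ∧ ∀ f ∈ 𝒳, ConstOrInjModFin f H) ∧ κ = #𝒳}

/-! Indicator functions of a splitting family witness `parNum1c ≤ 𝔰`. For `parNum1c ≤ 𝔟`, an
unbounded family gives interval partitions whose blocks outgrow its members; a block index that is
injective modulo finite on `H` is impossible, because infinitely often three points of `H` fall
into two consecutive blocks.

Conversely, take fewer than `min 𝔟 𝔰` functions. As `𝔰` is uncountable, some infinite `Y` is split
by none of their fibres, so on `Y` each of them is almost constant or finite-to-one. Thinning `Y`
out along a function that dominates the rates at which the finite-to-one ones leave their earlier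
values makes each of those injective on a tail. -/

section Splitting

lemma Set.Infinite.exists_splits {Y : Set ℕ} (hY : Y.Infinite) : ∃ X, Splits X Y := by
  set e := Nat.nth (· ∈ Y)
  have he : StrictMono e := Nat.nth_strictMono hY
  have hmem : ∀ k, e k ∈ Y := Nat.nth_mem_of_infinite hY
  have hinj : ∀ r, Function.Injective fun k => e (2 * k + r) := fun r j k h => by
    have := he.injective h
    omega
  refine ⟨range fun k => e (2 * k), (infinite_range_of_injective (hinj 0)).mono ?_,
    (infinite_range_of_injective (hinj 1)).mono ?_⟩
  · rintro _ ⟨k, rfl⟩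
    exact ⟨⟨k, rfl⟩, hmem _⟩
  · rintro _ ⟨k, rfl⟩
    refine ⟨hmem _, fun ⟨j, hj⟩ => ?_⟩
    have := he.injective hj
    omega

lemma not_splits_of_diff_finite {X Y Z : Set ℕ} (hZ : Z ⊆ X ∨ Disjoint Z X)
    (hYZ : (Y \ Z).Finite) : ¬ Splits X Y := by
  rintro ⟨hXY, hYX⟩
  rcases hZ with hZX | hZX
  · exact hYX (hYZ.subset (sdiff_subset_sdiff_right hZX))
  · exact hXY (hYZ.subset fun n hn => ⟨hn.2, fun hnZ => hZX.notMem_of_mem_left hnZ hn.1⟩)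

lemma exists_infinite_diff_finite_of_antitone {B : ℕ → Set ℕ} (hB : Antitone B)
    (hinf : ∀ k, (B k).Infinite) : ∃ Y : Set ℕ, Y.Infinite ∧ ∀ k, (Y \ B k).Finite := by
  choose y hyB hy using fun k => (hinf k).exists_gt k
  refine ⟨range y, infinite_of_not_bddAbove ?_, fun k => ?_⟩
  · rintro ⟨b, hb⟩
    exact (hy b).not_ge (hb (mem_range_self b))
  · refine ((finite_lt_nat k).image y).subset ?_
    rintro _ ⟨⟨j, rfl⟩, hj⟩
    exact ⟨j, not_le.1 fun hkj => hj (hB hkj (hyB j)), rfl⟩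

open Classical in
noncomputable def infinitePiece (X B : Set ℕ) : Set ℕ := if (B ∩ X).Infinite then B ∩ X else B \ X

lemma infinitePiece_subset (X B : Set ℕ) : infinitePiece X B ⊆ B := by
  unfold infinitePiece
  split_ifs
  exacts [inter_subset_left, sdiff_subset]

lemma infinite_infinitePiece {B : Set ℕ} (hB : B.Infinite) (X : Set ℕ) :
    (infinitePiece X B).Infinite := by
  unfold infinitePiece
  split_ifs with h
  · exact h
  · exact (infinite_union.1 ((inter_union_sdiff B X).symm ▸ hB)).resolve_left h

lemma infinitePiece_subset_or_disjoint (X B : Set ℕ) :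
    infinitePiece X B ⊆ X ∨ Disjoint (infinitePiece X B) X := by
  unfold infinitePiece
  split_ifs
  exacts [Or.inl inter_subset_right, Or.inr disjoint_sdiff_left]

def nestedPieces (A : ℕ → Set ℕ) : ℕ → Set ℕ
  | 0 => univ
  | k + 1 => infinitePiece (A k) (nestedPieces A k)

lemma exists_infinite_forall_not_splits_s15 (A : ℕ → Set ℕ) :
    ∃ Y : Set ℕ, Y.Infinite ∧ ∀ k, ¬ Splits (A k) Y := by
  have hinf : ∀ k, (nestedPieces A k).Infinite := by
    intro k
    induction k with
    | zero => exact infinite_univ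
    | succ k ih => exact infinite_infinitePiece ih (A k)
  obtain ⟨Y, hY, hYB⟩ := exists_infinite_diff_finite_of_antitone
    (antitone_nat_of_succ_le fun k => infinitePiece_subset _ _) hinf
  exact ⟨Y, hY, fun k =>
    not_splits_of_diff_finite (infinitePiece_subset_or_disjoint _ _) (hYB (k + 1))⟩

lemma aleph0_lt_mk_of_forall_splits {S : Set (Set ℕ)}
    (hS : ∀ Y : Set ℕ, Y.Infinite → ∃ X ∈ S, Splits X Y) : ℵ₀ < #S := by
  by_contra! hle
  obtain ⟨X₀, hX₀, -⟩ := hS univ infinite_univ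
  obtain ⟨A, rfl⟩ := (le_aleph0_iff_set_countable.1 hle).exists_eq_range ⟨X₀, hX₀⟩
  obtain ⟨Y, hY, hA⟩ := exists_infinite_forall_not_splits_s15 A
  obtain ⟨_, ⟨k, rfl⟩, hk⟩ := hS Y hY
  exact hA k hk

end Splitting

section CardinalCharacteristics

lemma exists_splitNum_eq_mk :
    ∃ S : Set (Set ℕ), (∀ Y : Set ℕ, Y.Infinite → ∃ X ∈ S, Splits X Y) ∧ splitNum = #S :=
  (csInf_mem ⟨_, univ, fun _ hY => hY.exists_splits.imp fun X hX => ⟨mem_univ X, hX⟩, rfl⟩ :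
    splitNum ∈ _)

lemma exists_boundNum_eq_mk :
    ∃ B : Set (ℕ → ℕ), (∀ g : ℕ → ℕ, ∃ f ∈ B, ¬ EvMaj g f) ∧ boundNum = #B :=
  (csInf_mem ⟨_, univ, fun g => ⟨g, mem_univ g, fun h => h.exists.elim fun _ hn => hn.false⟩,
    rfl⟩ : boundNum ∈ _)

lemma aleph0_lt_splitNum : ℵ₀ < splitNum := by
  obtain ⟨S, hS, hcard⟩ := exists_splitNum_eq_mk
  exact hcard ▸ aleph0_lt_mk_of_forall_splits hS

lemma exists_infinite_forall_not_splits_of_lt {S : Set (Set ℕ)} (h : #S < splitNum) :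
    ∃ Y : Set ℕ, Y.Infinite ∧ ∀ X ∈ S, ¬ Splits X Y := by
  by_contra! hS
  exact (csInf_le' ⟨S, hS, rfl⟩ : splitNum ≤ #S).not_gt h

lemma exists_forall_evMaj_of_lt {B : Set (ℕ → ℕ)} (h : #B < boundNum) :
    ∃ g : ℕ → ℕ, ∀ f ∈ B, EvMaj g f := by
  by_contra! hB
  exact (csInf_le' ⟨B, hB, rfl⟩ : boundNum ≤ #B).not_gt h

lemma parNum1c_le_mk {𝒳 : Set (ℕ → ℕ)}
    (h : ¬ ∃ H : Set ℕ, H.Infinite ∧ ∀ f ∈ 𝒳, ConstOrInjModFin f H) : parNum1c ≤ #𝒳 :=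
  csInf_le' ⟨𝒳, h, rfl⟩

end CardinalCharacteristics

section UpperBounds

lemma not_constOrInjModFin_indicator {X H : Set ℕ} (h : Splits X H) :
    ¬ ConstOrInjModFin (X.indicator 1) H := by
  rintro ⟨F, hF, -, ⟨m, hm⟩ | hinj⟩
  · obtain ⟨a, ha⟩ := (h.1.sdiff hF).nonempty
    obtain ⟨c, hc⟩ := (h.2.sdiff hF).nonempty
    have hA := hm a ⟨ha.1.2, ha.2⟩
    have hC := hm c ⟨hc.1.1, hc.2⟩
    rw [indicator_of_mem ha.1.1, Pi.one_apply] at hA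
    rw [indicator_of_notMem hc.1.2] at hC
    omega
  · obtain ⟨a, ha, b, hb, hab⟩ := (h.1.sdiff hF).nontrivial
    refine hab (hinj ⟨ha.1.2, ha.2⟩ ⟨hb.1.2, hb.2⟩ ?_)
    rw [indicator_of_mem ha.1.1, indicator_of_mem hb.1.1]
    rfl

lemma not_exists_homogeneous_indicator {S : Set (Set ℕ)}
    (hS : ∀ Y : Set ℕ, Y.Infinite → ∃ X ∈ S, Splits X Y) :
    ¬ ∃ H : Set ℕ, H.Infinite ∧
      ∀ f ∈ (fun X : Set ℕ => X.indicator 1) '' S, ConstOrInjModFin f H := by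
  rintro ⟨H, hH, hall⟩
  obtain ⟨X, hXS, hsp⟩ := hS H hH
  exact not_constOrInjModFin_indicator hsp (hall _ (mem_image_of_mem _ hXS))

lemma parNum1c_le_splitNum : parNum1c ≤ splitNum := by
  obtain ⟨S, hS, hcard⟩ := exists_splitNum_eq_mk
  calc parNum1c ≤ #((fun X : Set ℕ => X.indicator 1) '' S) :=
        parNum1c_le_mk (not_exists_homogeneous_indicator hS)
    _ ≤ #S := mk_image_le
    _ = splitNum := hcard.symm

variable (f : ℕ → ℕ)

def majorant (n : ℕ) : ℕ := n + ∑ i ∈ Finset.range (n + 1), f i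

lemma le_majorant {i n : ℕ} (h : i ≤ n) : f i ≤ majorant f n :=
  (Finset.single_le_sum (fun j _ => Nat.zero_le (f j))
    (Finset.mem_range.2 (Nat.lt_succ_of_le h))).trans (Nat.le_add_left _ _)

lemma self_le_majorant (n : ℕ) : n ≤ majorant f n := Nat.le_add_right _ _

/-- The blocks `[blockEnd f k, blockEnd f (k + 1))` partition `ℕ`, and `f` maps each block below the
end of the next one. -/
def blockEnd : ℕ → ℕ
  | 0 => 0
  | k + 1 => majorant f (blockEnd k) + 1

lemma blockEnd_strictMono : StrictMono (blockEnd f) :=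
  strictMono_nat_of_lt_succ fun k => Nat.lt_succ_of_le (self_le_majorant f (blockEnd f k))

def blockIdx (n : ℕ) : ℕ := Nat.findGreatest (fun k => blockEnd f k ≤ n) n

lemma le_blockIdx_iff {k n : ℕ} : k ≤ blockIdx f n ↔ blockEnd f k ≤ n :=
  ⟨fun h => ((blockEnd_strictMono f).monotone h).trans
      (Nat.findGreatest_spec (P := fun k => blockEnd f k ≤ n) (Nat.zero_le n) (Nat.zero_le n)),
    fun h => Nat.le_findGreatest ((blockEnd_strictMono f).le_apply.trans h) h⟩

lemma blockIdx_mono : Monotone (blockIdx f) := fun _ _ hab =>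
  (le_blockIdx_iff f).2 (((le_blockIdx_iff f).1 le_rfl).trans hab)

lemma blockIdx_le_succ_of_le {n w : ℕ} (h : w ≤ f n) : blockIdx f w ≤ blockIdx f n + 1 := by
  by_contra! hlt
  have hn : n < blockEnd f (blockIdx f n + 1) :=
    not_le.1 fun h' => by simpa using (le_blockIdx_iff f).2 h'
  have hw : blockEnd f (blockIdx f n + 2) ≤ w := (le_blockIdx_iff f).1 hlt
  have hfn := le_majorant f hn.le
  have hend : blockEnd f (blockIdx f n + 2) =
      majorant f (blockEnd f (blockIdx f n + 1)) + 1 := rfl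
  omega

lemma not_constOrInjModFin_blockIdx {H : Set ℕ} (hH : H.Infinite) {g : ℕ → ℕ}
    (hg : ∀ n, ∃ x ∈ H, ∃ y ∈ H, ∃ z ∈ H, n < x ∧ x < y ∧ y < z ∧ z < g n)
    (hfg : ¬ EvMaj g f) : ¬ ConstOrInjModFin (blockIdx f) H := by
  rintro ⟨F, hF, -, ⟨m, hm⟩ | hinj⟩
  · obtain ⟨x, hxH, hx⟩ := (hH.sdiff hF).exists_gt (blockEnd f (m + 1))
    have hxm := hm x hxH
    have := (le_blockIdx_iff f).2 hx.le
    omega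
  · obtain ⟨b, hb⟩ := hF.bddAbove
    obtain ⟨n, hbn, hgf⟩ := frequently_atTop.1 (not_eventually.1 hfg) b
    obtain ⟨x, hx, y, hy, z, hz, hnx, hxy, hyz, hzg⟩ := hg n
    have hne : ∀ u ∈ H, ∀ v ∈ H, n < u → u < v → blockIdx f u ≠ blockIdx f v :=
      fun u hu v hv hnu huv heq => huv.ne <| hinj
        ⟨hu, fun huF => (hb huF).not_gt (hbn.trans_lt hnu)⟩
        ⟨hv, fun hvF => (hb hvF).not_gt (hbn.trans_lt (hnu.trans huv))⟩ heq
    have hbetween : ∀ w, n < w → w < g n →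
        blockIdx f n ≤ blockIdx f w ∧ blockIdx f w ≤ blockIdx f n + 1 :=
      fun w hnw hwg => ⟨blockIdx_mono f hnw.le, blockIdx_le_succ_of_le f (by omega)⟩
    have := hne x hx y hy hnx hxy
    have := hne y hy z hz (hnx.trans hxy) hyz
    have := hne x hx z hz hnx (hxy.trans hyz)
    have := hbetween x hnx (by omega)
    have := hbetween y (by omega) (by omega)
    have := hbetween z (by omega) hzg
    omega

lemma parNum1c_le_boundNum : parNum1c ≤ boundNum := by
  obtain ⟨B, hB, hcard⟩ := exists_boundNum_eq_mk
  refine (parNum1c_le_mk (𝒳 := blockIdx '' B) ?_).trans (mk_image_le.trans hcard.ge)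
  rintro ⟨H, hH, hall⟩
  have hthree : ∀ n, ∃ b, ∃ x ∈ H, ∃ y ∈ H, ∃ z ∈ H, n < x ∧ x < y ∧ y < z ∧ z < b := by
    intro n
    obtain ⟨x, hx, hnx⟩ := hH.exists_gt n
    obtain ⟨y, hy, hxy⟩ := hH.exists_gt x
    obtain ⟨z, hz, hyz⟩ := hH.exists_gt y
    exact ⟨z + 1, x, hx, y, hy, z, hz, hnx, hxy, hyz, z.lt_succ_self⟩
  choose g hg using hthree
  obtain ⟨f, hfB, hfg⟩ := hB g
  exact not_constOrInjModFin_blockIdx f hH hg hfg (hall _ (mem_image_of_mem _ hfB))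

end UpperBounds

section LowerBound

lemma constOrInjModFin_of_diff_finite {f : ℕ → ℕ} {H : Set ℕ} {m : ℕ}
    (h : (H \ f ⁻¹' {m}).Finite) : ConstOrInjModFin f H :=
  ⟨H \ f ⁻¹' {m}, h, sdiff_subset, Or.inl ⟨m, fun _ hn => by_contra fun hne => hn.2 ⟨hn.1, hne⟩⟩⟩

lemma exists_diff_finite_or_forall_finite {Y : Set ℕ} {f : ℕ → ℕ}
    (h : ∀ m, ¬ Splits (f ⁻¹' {m}) Y) :
    (∃ m, (Y \ f ⁻¹' {m}).Finite) ∨ ∀ m, (f ⁻¹' {m} ∩ Y).Finite := by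
  refine or_iff_not_imp_right.2 fun hinf => ?_
  obtain ⟨m, hm⟩ := not_forall.1 hinf
  exact ⟨m, not_infinite.1 fun h' => h m ⟨not_finite.1 hm, h'⟩⟩

/-- Beyond `escapeBound Y f C`, the points of `Y` avoid every value `f` takes on `[0, C]`
(when `f` is finite-to-one on `Y`). -/
noncomputable def escapeBound (Y : Set ℕ) (f : ℕ → ℕ) (C : ℕ) : ℕ :=
  sSup (Y ∩ f ⁻¹' (f '' Iic C))

lemma ne_of_escapeBound_lt {Y : Set ℕ} {f : ℕ → ℕ} (hfin : ∀ v, (f ⁻¹' {v} ∩ Y).Finite)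
    {C n m : ℕ} (hn : n ∈ Y) (hC : escapeBound Y f C < n) (hm : m ≤ C) : f n ≠ f m := by
  intro heq
  have hfin' : (Y ∩ f ⁻¹' (f '' Iic C)).Finite := by
    refine ((finite_Iic C).biUnion fun i _ => hfin (f i)).subset ?_
    rintro k ⟨hkY, i, hi, hfi⟩
    exact mem_biUnion hi ⟨hfi.symm, hkY⟩
  exact hC.not_ge (le_csSup hfin'.bddAbove ⟨hn, m, hm, heq.symm⟩)

lemma exists_strictMono_sparse {Y : Set ℕ} (hY : Y.Infinite) (g : ℕ → ℕ) :
    ∃ h : ℕ → ℕ, StrictMono h ∧ (∀ j, h j ∈ Y) ∧ ∀ j, g (h j) < h (j + 1) := by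
  choose next hnextY hnext using hY.exists_gt
  let h : ℕ → ℕ := fun j => Nat.rec (next 0) (fun _ x => next (max (g x) x)) j
  refine ⟨h, strictMono_nat_of_lt_succ fun j => (le_max_right _ _).trans_lt (hnext _),
    fun j => ?_, fun j => (le_max_left _ _).trans_lt (hnext _)⟩
  cases j <;> exact hnextY _

lemma injOn_range_diff_image_Iic {f h : ℕ → ℕ} {N : ℕ} (hh : StrictMono h)
    (hsep : ∀ j ≥ N, ∀ m ≤ h j, f (h (j + 1)) ≠ f m) : InjOn f (range h \ h '' Iic N) := by
  have hlt : ∀ i j, N < j → i < j → f (h j) ≠ f (h i) := by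
    intro i j hNj hij
    obtain ⟨k, rfl⟩ : ∃ k, j = k + 1 := ⟨j - 1, by omega⟩
    exact hsep k (by omega) _ (hh.monotone (by omega))
  rintro _ ⟨⟨i, rfl⟩, hi⟩ _ ⟨⟨j, rfl⟩, hj⟩ heq
  have hNi : N < i := not_le.1 fun h' => hi ⟨i, h', rfl⟩
  have hNj : N < j := not_le.1 fun h' => hj ⟨j, h', rfl⟩
  rcases lt_trichotomy i j with hij | rfl | hij
  · exact absurd heq.symm (hlt i j hNj hij)
  · rfl
  · exact absurd heq (hlt j i hNi hij)

lemma exists_homogeneous_of_lt {𝒳 : Set (ℕ → ℕ)} (hb : #𝒳 < boundNum) (hs : #𝒳 < splitNum) :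
    ∃ H : Set ℕ, H.Infinite ∧ ∀ f ∈ 𝒳, ConstOrInjModFin f H := by
  have hfibers : #(range fun p : 𝒳 × ℕ => (p.1 : ℕ → ℕ) ⁻¹' {p.2}) < splitNum := by
    refine mk_range_le.trans_lt ?_
    rw [mk_prod, lift_id, mk_nat, lift_aleph0]
    exact mul_lt_of_lt aleph0_lt_splitNum.le hs aleph0_lt_splitNum
  obtain ⟨Y, hY, hYfib⟩ := exists_infinite_forall_not_splits_of_lt hfibers
  obtain ⟨g, hg⟩ :=
    exists_forall_evMaj_of_lt (mk_image_le.trans_lt hb : #(escapeBound Y '' 𝒳) < boundNum)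
  obtain ⟨h, hh, hhY, hgh⟩ := exists_strictMono_sparse hY g
  refine ⟨range h, infinite_range_of_injective hh.injective, fun f hf => ?_⟩
  rcases exists_diff_finite_or_forall_finite fun m => hYfib _ ⟨(⟨f, hf⟩, m), rfl⟩ with
    ⟨m, hm⟩ | hfin
  · exact constOrInjModFin_of_diff_finite
      (hm.subset (sdiff_subset_sdiff_left (range_subset_iff.2 hhY)))
  · obtain ⟨N, hN⟩ := eventually_atTop.1 (hg _ (mem_image_of_mem _ hf))
    refine ⟨h '' Iic N, (finite_Iic N).image h, image_subset_range _ _,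
      Or.inr (injOn_range_diff_image_Iic hh fun j hj m hm => ?_)⟩
    exact ne_of_escapeBound_lt hfin (hhY _) ((hN _ (hj.trans hh.le_apply)).trans (hgh j)) hm

end LowerBound

theorem parNum1c_eq_min : parNum1c = min boundNum splitNum := by
  refine le_antisymm (le_min parNum1c_le_boundNum parNum1c_le_splitNum) ?_
  obtain ⟨S, hS, -⟩ := exists_splitNum_eq_mk
  obtain ⟨𝒳, h𝒳, hcard⟩ : parNum1c ∈ _ :=
    csInf_mem ⟨_, _, not_exists_homogeneous_indicator hS, rfl⟩
  rw [hcard]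
  refine le_of_not_gt fun hlt => h𝒳 ?_
  exact exists_homogeneous_of_lt (lt_min_iff.1 hlt).1 (lt_min_iff.1 hlt).2
end
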